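/- arXiv:math/0211106 — 2 statements merged into one kernel-verified Lean document; each statement's English description precedes it below -/
import Mathlib

section
/- Let 1 ≤ k < n be coprime, with Hirzebruch–Jung continued fraction expansions n/k = [n_1,...,n_p] and n/(n−k) = [n_1',...,n_{p'}']. Then n_1' + ⋯ + n_{p'}' = 2(n_1 + ⋯ + n_p) − 3p + 1. -/
/-! Set `x = n/k` and `y = n/(n-k)`, so that `x⁻¹ + y⁻¹ = 1`, a relation symmetric in the two
expansions. If `x < 2` then the first expansion is `2 :: T` with `hjEval T = (2 - x)⁻¹`, while
`y > 2`; the pair `(T, (n₁' - 1) :: …)` is again dual. This strips a leading `2` from one side and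
lowers the head of the other by one, so induction on `p + p'` gives the symmetric identities
`∑ nᵢ = 2p + p' - 1` and `∑ nⱼ' = p + 2p' - 1`, from which the claim follows. -/

/-- Evaluation of the Hirzebruch–Jung ("negative") continued fraction
`[n₁,…,n_p] = n₁ − 1/(n₂ − 1/(⋯ − 1/n_p))` as a rational number. -/
def hjEval : List ℤ → ℚ
  | [] => 0
  | [a] => (a : ℚ)
  | a :: b :: l => (a : ℚ) - 1 / hjEval (b :: l)

@[simp]
lemma hjEval_nil : hjEval [] = 0 := rfl

-- Holds also for `T = []`, since `0⁻¹ = 0`.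
lemma hjEval_cons (a : ℤ) (T : List ℤ) : hjEval (a :: T) = a - (hjEval T)⁻¹ := by
  cases T <;> simp [hjEval]

lemma hjEval_cons_sub_one (a : ℤ) (T : List ℤ) :
    hjEval ((a - 1) :: T) = hjEval (a :: T) - 1 := by
  rw [hjEval_cons, hjEval_cons]; push_cast; ring

section Bounds

variable {T : List ℤ} (h2 : ∀ x ∈ T, 2 ≤ x)
include h2

lemma one_lt_hjEval (hT : T ≠ []) : 1 < hjEval T := by
  induction T with
  | nil => exact absurd rfl hT
  | cons a T ih =>
    have ha : (2 : ℚ) ≤ a := by exact_mod_cast h2 a List.mem_cons_self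
    have hinv : (hjEval T)⁻¹ < 1 := by
      rcases eq_or_ne T [] with rfl | hT'
      · simp
      · exact inv_lt_one_of_one_lt₀ (ih (fun x hx => h2 x (List.mem_cons_of_mem _ hx)) hT')
    rw [hjEval_cons]
    linarith

lemma inv_hjEval_lt_one : (hjEval T)⁻¹ < 1 := by
  rcases eq_or_ne T [] with rfl | hT
  · simp
  · exact inv_lt_one_of_one_lt₀ (one_lt_hjEval h2 hT)

lemma inv_hjEval_nonneg : 0 ≤ (hjEval T)⁻¹ := by
  rcases eq_or_ne T [] with rfl | hT
  · simp
  · exact inv_nonneg.2 (zero_le_one.trans (one_lt_hjEval h2 hT).le)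

lemma sub_one_lt_hjEval_cons (a : ℤ) : (a : ℚ) - 1 < hjEval (a :: T) := by
  rw [hjEval_cons]; linarith [inv_hjEval_lt_one h2]

lemma hjEval_cons_le (a : ℤ) : hjEval (a :: T) ≤ a := by
  rw [hjEval_cons]; linarith [inv_hjEval_nonneg h2]

lemma hjEval_cons_lt (a : ℤ) (hT : T ≠ []) : hjEval (a :: T) < a := by
  rw [hjEval_cons]; linarith [inv_pos.2 (zero_lt_one.trans (one_lt_hjEval h2 hT))]

end Bounds

section Head

lemma eq_two_of_hjEval_cons_le_two {a : ℤ} {T : List ℤ} (h2 : ∀ x ∈ a :: T, 2 ≤ x)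
    (h : hjEval (a :: T) ≤ 2) : a = 2 := by
  have h2T : ∀ x ∈ T, 2 ≤ x := fun x hx => h2 x (List.mem_cons_of_mem _ hx)
  have hlt : (a : ℚ) < 3 := by linarith [sub_one_lt_hjEval_cons h2T a]
  have := h2 a List.mem_cons_self
  have : a < 3 := by exact_mod_cast hlt
  omega

variable {L : List ℤ} (hL : L ≠ []) (h2 : ∀ x ∈ L, 2 ≤ x)
include hL h2

lemma eq_singleton_two_of_hjEval_eq_two (h : hjEval L = 2) : L = [2] := by
  obtain ⟨a, T, rfl⟩ := List.exists_cons_of_ne_nil hL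
  obtain rfl := eq_two_of_hjEval_cons_le_two h2 h.le
  by_contra hT
  have := hjEval_cons_lt (fun x hx => h2 x (List.mem_cons_of_mem _ hx)) 2 (by simpa using hT)
  push_cast at this
  linarith

lemma exists_eq_two_cons_of_hjEval_lt_two (h : hjEval L < 2) : ∃ T ≠ [], L = 2 :: T := by
  obtain ⟨a, T, rfl⟩ := List.exists_cons_of_ne_nil hL
  obtain rfl := eq_two_of_hjEval_cons_le_two h2 h.le
  refine ⟨T, ?_, rfl⟩
  rintro rfl
  simp [hjEval] at h

lemma exists_cons_three_le_of_two_lt_hjEval (h : 2 < hjEval L) :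
    ∃ a T, L = a :: T ∧ 3 ≤ a ∧ ∀ x ∈ T, 2 ≤ x := by
  obtain ⟨a, T, rfl⟩ := List.exists_cons_of_ne_nil hL
  have h2T : ∀ x ∈ T, 2 ≤ x := fun x hx => h2 x (List.mem_cons_of_mem _ hx)
  have : (2 : ℚ) < a := h.trans_le (hjEval_cons_le h2T a)
  exact ⟨a, T, rfl, by exact_mod_cast this, h2T⟩

end Head

structure HJDual (L L' : List ℤ) : Prop where
  ne_nil : L ≠ []
  ne_nil' : L' ≠ []
  two_le : ∀ a ∈ L, 2 ≤ a
  two_le' : ∀ a ∈ L', 2 ≤ a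
  inv_add_inv : (hjEval L)⁻¹ + (hjEval L')⁻¹ = 1

namespace HJDual

variable {L L' : List ℤ}

lemma symm (h : HJDual L L') : HJDual L' L :=
  ⟨h.ne_nil', h.ne_nil, h.two_le', h.two_le, by rw [add_comm]; exact h.inv_add_inv⟩

lemma hjEval_lt_two_iff (h : HJDual L L') : hjEval L < 2 ↔ 2 < hjEval L' := by
  have hx := zero_lt_one.trans (one_lt_hjEval h.two_le h.ne_nil)
  have hy := zero_lt_one.trans (one_lt_hjEval h.two_le' h.ne_nil')
  rw [← inv_lt_inv₀ two_pos hx, ← inv_lt_inv₀ hy two_pos]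
  constructor <;> intro <;> linarith [h.inv_add_inv]

lemma eq_two (h : HJDual L L') (heq : hjEval L = 2) : L = [2] ∧ L' = [2] := by
  have hy : hjEval L' = 2 := by
    have := h.inv_add_inv
    rw [heq] at this
    rw [← inv_inv (hjEval L'), show (hjEval L')⁻¹ = 2⁻¹ by linarith]
    norm_num
  exact ⟨eq_singleton_two_of_hjEval_eq_two h.ne_nil h.two_le heq,
    eq_singleton_two_of_hjEval_eq_two h.ne_nil' h.two_le' hy⟩

lemma exists_cons_of_hjEval_lt_two (h : HJDual L L') (hlt : hjEval L < 2) :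
    ∃ T a' T', L = 2 :: T ∧ L' = a' :: T' ∧ HJDual T ((a' - 1) :: T') := by
  obtain ⟨T, hT, rfl⟩ := exists_eq_two_cons_of_hjEval_lt_two h.ne_nil h.two_le hlt
  obtain ⟨a', T', rfl, ha', h2T'⟩ :=
    exists_cons_three_le_of_two_lt_hjEval h.ne_nil' h.two_le' (h.hjEval_lt_two_iff.1 hlt)
  refine ⟨T, a', T', rfl, rfl, hT, by simp, fun x hx => h.two_le x (List.mem_cons_of_mem _ hx),
    ?_, ?_⟩
  · intro x hx
    rcases List.mem_cons.1 hx with rfl | hx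
    · omega
    · exact h2T' x hx
  · have hx := one_lt_hjEval h.two_le h.ne_nil
    have hy := h.hjEval_lt_two_iff.1 hlt
    have hdual := h.inv_add_inv
    rw [hjEval_cons] at hx hdual
    rw [hjEval_cons_sub_one]
    generalize (hjEval T)⁻¹ = u at hx hdual ⊢
    generalize hjEval (a' :: T') = y at hy hdual ⊢
    push_cast at hx hdual
    have h2u : 2 - u ≠ 0 := by linarith
    have hy0 : y ≠ 0 := by linarith
    have hy1 : y - 1 ≠ 0 := by linarith
    field_simp at hdual ⊢
    linear_combination hdual

theorem sum_eq {L L' : List ℤ} (h : HJDual L L') :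
    L.sum = 2 * L.length + L'.length - 1 ∧ L'.sum = L.length + 2 * L'.length - 1 := by
  rcases lt_trichotomy (hjEval L) 2 with hlt | heq | hgt
  · obtain ⟨T, a', T', rfl, rfl, hd⟩ := h.exists_cons_of_hjEval_lt_two hlt
    have := sum_eq hd
    simp only [List.sum_cons, List.length_cons] at this ⊢
    push_cast at this ⊢
    omega
  · obtain ⟨rfl, rfl⟩ := h.eq_two heq
    norm_num
  · obtain ⟨T', a, T, rfl, rfl, hd⟩ :=
      h.symm.exists_cons_of_hjEval_lt_two (h.symm.hjEval_lt_two_iff.2 hgt)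
    have := sum_eq hd
    simp only [List.sum_cons, List.length_cons] at this ⊢
    push_cast at this ⊢
    omega
termination_by L.length + L'.length
decreasing_by all_goals subst_vars; simp only [List.length_cons]; omega

end HJDual

theorem hj_dual_sum_general (n k : ℕ)
    (L L' : List ℤ) (hL : L ≠ []) (hL' : L' ≠ [])
    (h2 : ∀ a ∈ L, 2 ≤ a) (h2' : ∀ a ∈ L', 2 ≤ a)
    (hval : hjEval L = (n : ℚ) / (k : ℚ))
    (hval' : hjEval L' = (n : ℚ) / ((n : ℚ) - (k : ℚ))) :
    L'.sum = 2 * L.sum - 3 * L.length + 1 := by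
  have hn : (n : ℚ) ≠ 0 := by
    intro hn
    have := one_lt_hjEval h2 hL
    rw [hval, hn, zero_div] at this
    exact absurd this (by norm_num)
  have hd : HJDual L L' := ⟨hL, hL', h2, h2', by
    rw [hval, hval', inv_div, inv_div]
    field_simp
    ring⟩
  obtain ⟨hsum, hsum'⟩ := hd.sum_eq
  omega

/-- If `n/k = [n₁,…,n_p]` and `n/(n−k) = [n₁',…,n_{p'}']` are the Hirzebruch–Jung
continued fraction expansions (all entries ≥ 2) for coprime `1 ≤ k < n`, then
`n₁' + ⋯ + n_{p'}' = 2(n₁ + ⋯ + n_p) − 3p + 1`. -/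
theorem hj_dual_sum (n k : ℕ) (hk : 1 ≤ k) (hkn : k < n) (hco : Nat.Coprime n k)
    (L L' : List ℤ) (hL : L ≠ []) (hL' : L' ≠ [])
    (h2 : ∀ a ∈ L, 2 ≤ a) (h2' : ∀ a ∈ L', 2 ≤ a)
    (hval : hjEval L = (n : ℚ) / (k : ℚ))
    (hval' : hjEval L' = (n : ℚ) / ((n : ℚ) - (k : ℚ))) :
    L'.sum = 2 * L.sum - 3 * L.length + 1 :=
  hj_dual_sum_general n k L L' hL hL' h2 h2' hval hval'
end

section
/- Let 1 ≤ k < n be coprime with continued fraction expansions n/k = [n_1,...,n_p] and n/(n−k) = [n_1',...,n_{p'}'] (entries ≥ 2). Then n_1' + ⋯ + n_α' = 2α + β whenever n_1 + ⋯ + n_β − 2β + 1 ≤ α ≤ n_1 + ⋯ + n_{β+1} − 2β − 2. Equivalently, the Young diagrams of the partitions (n_1−1, n_1+n_2−3, ..., n_1+⋯+n_α−2α+1, ...) and (n_1'−1, n_1'+n_2'−3, ..., n_1'+⋯+n_β'−2β+1, ...) are dual (conjugate) to each other. -/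
theorem hjEval_cons_s5 (a : ℤ) {l : List ℤ} (hl : l ≠ []) :
    hjEval (a :: l) = a - 1 / hjEval l := by
  obtain ⟨b, t, rfl⟩ := List.exists_cons_of_ne_nil hl
  rfl

theorem hjEval_add_one_cons (a : ℤ) (l : List ℤ) :
    hjEval ((a + 1) :: l) = hjEval (a :: l) + 1 := by
  rcases eq_or_ne l [] with rfl | hl
  · simp [hjEval]
  · rw [hjEval_cons_s5 _ hl, hjEval_cons_s5 _ hl]
    push_cast
    ring

theorem hjEval_modifyHead_add_one {L : List ℤ} (hL : L ≠ []) :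
    hjEval (L.modifyHead (· + 1)) = hjEval L + 1 := by
  obtain ⟨a, l, rfl⟩ := List.exists_cons_of_ne_nil hL
  exact hjEval_add_one_cons a l

theorem one_lt_hjEval_s5 : ∀ {L : List ℤ}, L ≠ [] → (∀ x ∈ L, 2 ≤ x) → 1 < hjEval L
  | [a], _, h2 => by
    have : (2 : ℚ) ≤ a := by exact_mod_cast h2 a (by simp)
    simp only [hjEval]
    linarith
  | a :: b :: l, _, h2 => by
    have hy : 1 < hjEval (b :: l) :=
      one_lt_hjEval_s5 (List.cons_ne_nil b l) fun x hx => h2 x (List.mem_cons_of_mem a hx)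
    have ha : (2 : ℚ) ≤ a := by exact_mod_cast h2 a (by simp)
    have : 1 / hjEval (b :: l) < 1 := (div_lt_one (by linarith)).2 hy
    simp only [hjEval]
    linarith

theorem hjEval_cons_mem_Ioo (a : ℤ) {l : List ℤ} (hl : l ≠ []) (h2 : ∀ x ∈ l, 2 ≤ x) :
    hjEval (a :: l) ∈ Set.Ioo ((a : ℚ) - 1) a := by
  have hy := one_lt_hjEval_s5 hl h2
  have hpos : 0 < 1 / hjEval l := by positivity
  have hlt : 1 / hjEval l < 1 := (div_lt_one (by linarith)).2 hy
  rw [hjEval_cons_s5 a hl]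
  constructor <;> linarith

theorem ceil_hjEval_cons (a : ℤ) {l : List ℤ} (h2 : ∀ x ∈ l, 2 ≤ x) :
    ⌈hjEval (a :: l)⌉ = a := by
  rcases eq_or_ne l [] with rfl | hl
  · simp [hjEval]
  · obtain ⟨hlo, hhi⟩ := hjEval_cons_mem_Ioo a hl h2
    exact Int.ceil_eq_iff.2 ⟨hlo, hhi.le⟩

theorem hjEval_inj : ∀ {L M : List ℤ}, L ≠ [] → M ≠ [] →
    (∀ x ∈ L, 2 ≤ x) → (∀ x ∈ M, 2 ≤ x) → hjEval L = hjEval M → L = M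
  | a :: l, b :: m, _, _, h2L, h2M, h => by
    have h2l : ∀ x ∈ l, 2 ≤ x := fun x hx => h2L x (List.mem_cons_of_mem a hx)
    have h2m : ∀ x ∈ m, 2 ≤ x := fun x hx => h2M x (List.mem_cons_of_mem b hx)
    obtain rfl : a = b := by rw [← ceil_hjEval_cons a h2l, h, ceil_hjEval_cons b h2m]
    rcases eq_or_ne l [] with rfl | hl <;> rcases eq_or_ne m [] with rfl | hm
    · rfl
    · exact absurd h.symm (hjEval_cons_mem_Ioo a hm h2m).2.ne
    · exact absurd h (hjEval_cons_mem_Ioo a hl h2l).2.ne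
    · rw [hjEval_cons_s5 a hl, hjEval_cons_s5 a hm, sub_right_inj, one_div, one_div, inv_inj] at h
      rw [hjEval_inj hl hm h2l h2m h]

/-- `[1]` stands for the expansion of `∞ / (∞ - 1) = 1`, the dual of the empty expansion;
with it the recursion `hjDual (2 :: l) = (hjDual l).modifyHead (· + 1)` holds also for `l = []`. -/
def hjDual : List ℤ → List ℤ
  | [] => [1]
  | a :: l => if a ≤ 2 then (hjDual l).modifyHead (· + 1) else 2 :: hjDual ((a - 1) :: l)
termination_by L => (L.map Int.toNat).sum + L.length
decreasing_by all_goals simp; omega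

theorem hjDual_two_cons (l : List ℤ) : hjDual (2 :: l) = (hjDual l).modifyHead (· + 1) := by
  rw [hjDual]; simp

theorem hjDual_add_one_cons {a : ℤ} (ha : 2 ≤ a) (l : List ℤ) :
    hjDual ((a + 1) :: l) = 2 :: hjDual (a :: l) := by
  rw [hjDual]; simp [show ¬ a + 1 ≤ 2 by omega]

theorem hjDual_ne_nil (L : List ℤ) : hjDual L ≠ [] := by
  fun_induction hjDual L <;> simp_all

@[elab_as_elim]
theorem hj_induction {motive : List ℤ → Prop} (singleton_two : motive [2])
    (two_cons : ∀ l, l ≠ [] → (∀ x ∈ l, 2 ≤ x) → motive l → motive (2 :: l))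
    (add_one_cons :
      ∀ a l, 2 ≤ a → (∀ x ∈ l, 2 ≤ x) → motive (a :: l) → motive ((a + 1) :: l)) :
    ∀ {L : List ℤ}, L ≠ [] → (∀ x ∈ L, 2 ≤ x) → motive L
  | a :: l, _, h2 => by
    have h2l : ∀ x ∈ l, 2 ≤ x := fun x hx => h2 x (List.mem_cons_of_mem a hx)
    induction a, h2 a List.mem_cons_self using Int.leInduction with
    | base =>
      rcases eq_or_ne l [] with rfl | hl
      · exact singleton_two
      · exact two_cons l hl h2l (hj_induction singleton_two two_cons add_one_cons hl h2l)
    | succ a ha ih =>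
      exact add_one_cons a l ha h2l
        (ih (List.cons_ne_nil a l) (List.forall_mem_cons.2 ⟨ha, h2l⟩))

theorem two_le_of_mem_hjDual {L : List ℤ} (hL : L ≠ []) (h2 : ∀ x ∈ L, 2 ≤ x) :
    ∀ x ∈ hjDual L, 2 ≤ x := by
  refine hj_induction ?_ (fun l _ _ ih => ?_) (fun a l ha _ ih => ?_) hL h2
  · simp [hjDual_two_cons, hjDual]
  · obtain ⟨d, u, hd⟩ := List.exists_cons_of_ne_nil (hjDual_ne_nil l)
    rw [hd] at ih
    simp only [hjDual_two_cons, hd, List.modifyHead_cons, List.mem_cons] at ih ⊢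
    rintro x (rfl | hx)
    · linarith [ih d (Or.inl rfl)]
    · exact ih x (Or.inr hx)
  · simpa [hjDual_add_one_cons ha] using ih

theorem hjEval_hjDual {L : List ℤ} (hL : L ≠ []) (h2 : ∀ x ∈ L, 2 ≤ x) :
    hjEval (hjDual L) = hjEval L / (hjEval L - 1) := by
  refine hj_induction ?_ (fun l hl h2l ih => ?_) (fun a l ha h2l ih => ?_) hL h2
  · norm_num [hjDual_two_cons, hjDual, hjEval]
  · have hy := one_lt_hjEval_s5 hl h2l
    rw [hjDual_two_cons, hjEval_modifyHead_add_one (hjDual_ne_nil l), ih, hjEval_cons_s5 2 hl]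
    set y := hjEval l
    have hy0 : y ≠ 0 := by positivity
    have hy1 : y - 1 ≠ 0 := by linarith
    have : (2 : ℚ) - 1 / y - 1 = (y - 1) / y := by field_simp; ring
    push_cast
    rw [this]
    field_simp
    ring
  · have hx := one_lt_hjEval_s5 (List.cons_ne_nil a l) (List.forall_mem_cons.2 ⟨ha, h2l⟩)
    rw [hjDual_add_one_cons ha, hjEval_cons_s5 2 (hjDual_ne_nil _), ih, hjEval_add_one_cons,
      add_sub_cancel_right, one_div_div]
    have : hjEval (a :: l) ≠ 0 := by positivity
    push_cast
    field_simp
    ring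

theorem two_mul_le_sum_take {L : List ℤ} (h2 : ∀ x ∈ L, 2 ≤ x) {β : ℕ}
    (hβ : β ≤ L.length) :
    2 * (β : ℤ) ≤ (L.take β).sum := by
  have := (L.take β).card_nsmul_le_sum 2 fun x hx => h2 x (List.mem_of_mem_take hx)
  simpa [min_eq_left hβ, mul_comm] using this

/-- With `S`, `S'` the partial sums of `L`, `M`: the partitions `(S_β - 2β + 1)_β` and
`(S'_α - 2α + 1)_α` are conjugate, in the form `S'_α = 2α + β` on the `β`-th block
of `α`s. -/
def PartialSumsConjugate (L M : List ℤ) : Prop :=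
  ∀ α β : ℕ, β < L.length →
    (L.take β).sum - 2 * (β : ℤ) + 1 ≤ (α : ℤ) →
    (α : ℤ) ≤ (L.take (β + 1)).sum - 2 * (β : ℤ) - 2 →
    (M.take α).sum = 2 * (α : ℤ) + (β : ℤ)

theorem partialSumsConjugate_singleton_two (M : List ℤ) : PartialSumsConjugate [2] M := by
  intro α β hβ hlo hhi
  obtain rfl : β = 0 := by simpa using hβ
  simp only [List.take_succ_cons, List.take_zero, List.sum_cons, List.sum_nil] at hlo hhi
  omega

theorem PartialSumsConjugate.two_cons {l M : List ℤ} (h : PartialSumsConjugate l M)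
    (hM : M ≠ []) :
    PartialSumsConjugate (2 :: l) (M.modifyHead (· + 1)) := by
  intro α β hβ hlo hhi
  obtain ⟨d, u, rfl⟩ := List.exists_cons_of_ne_nil hM
  rcases β with _ | γ
  · simp only [List.take_succ_cons, List.take_zero, List.sum_cons, List.sum_nil] at hlo hhi
    omega
  simp only [List.take_succ_cons, List.sum_cons, List.length_cons] at hβ hlo hhi
  push_cast at hlo hhi
  have ih := h α γ (by omega) (by omega) (by omega)
  rcases α with _ | α
  · simp only [List.take_zero, List.sum_nil] at ih
    obtain rfl : γ = 0 := by omega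
    simp only [List.take_zero, List.sum_nil] at hlo
    omega
  · simp only [List.modifyHead_cons, List.take_succ_cons, List.sum_cons] at ih ⊢
    push_cast at ih ⊢
    omega

theorem PartialSumsConjugate.add_one_cons {a : ℤ} {l M : List ℤ}
    (h : PartialSumsConjugate (a :: l) M) (h2 : ∀ x ∈ (a + 1) :: l, 2 ≤ x) :
    PartialSumsConjugate ((a + 1) :: l) (2 :: M) := by
  intro α β hβ hlo hhi
  have hsum := two_mul_le_sum_take h2 hβ.le
  rcases α with _ | α
  · omega
  rcases β with _ | γ
  · simp only [List.take_succ_cons, List.take_zero, List.sum_cons, List.sum_nil] at hlo hhi ⊢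
    rcases Nat.eq_zero_or_pos α with rfl | hα
    · simp
    · have ih := h α 0 (by simp)
        (by simp only [List.take_zero, List.sum_nil]; omega)
        (by simp only [List.take_succ_cons, List.take_zero, List.sum_cons, List.sum_nil]; omega)
      push_cast at ih ⊢
      omega
  simp only [List.take_succ_cons, List.sum_cons, List.length_cons] at hβ hlo hhi ⊢
  have ih := h α (γ + 1) (by simpa using hβ)
    (by simp only [List.take_succ_cons, List.sum_cons]; push_cast at hlo ⊢; omega)
    (by simp only [List.take_succ_cons, List.sum_cons]; push_cast at hhi ⊢; omega)
  push_cast at ih ⊢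
  omega

theorem partialSumsConjugate_hjDual {L : List ℤ} (hL : L ≠ []) (h2 : ∀ x ∈ L, 2 ≤ x) :
    PartialSumsConjugate L (hjDual L) := by
  refine hj_induction ?_ (fun l _ _ ih => ?_) (fun a l ha hl ih => ?_) hL h2
  · exact partialSumsConjugate_singleton_two _
  · rw [hjDual_two_cons]
    exact ih.two_cons (hjDual_ne_nil l)
  · rw [hjDual_add_one_cons ha]
    exact ih.add_one_cons (List.forall_mem_cons.2 ⟨by omega, hl⟩)

theorem hj_dual_partial_sums_general (n k : ℕ) (hk : 1 ≤ k)
    (L L' : List ℤ) (hL : L ≠ []) (hL' : L' ≠ [])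
    (h2 : ∀ a ∈ L, 2 ≤ a) (h2' : ∀ a ∈ L', 2 ≤ a)
    (hval : hjEval L = (n : ℚ) / (k : ℚ))
    (hval' : hjEval L' = (n : ℚ) / ((n : ℚ) - (k : ℚ))) :
    ∀ α β : ℕ, β < L.length →
      (L.take β).sum - 2 * (β : ℤ) + 1 ≤ (α : ℤ) →
      (α : ℤ) ≤ (L.take (β + 1)).sum - 2 * (β : ℤ) - 2 →
      (L'.take α).sum = 2 * (α : ℤ) + (β : ℤ) := by
  have hk0 : (k : ℚ) ≠ 0 := Nat.cast_ne_zero.2 (by omega)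
  have hdual : hjEval (hjDual L) = n / (n - k) := by
    rw [hjEval_hjDual hL h2, hval, div_sub_one hk0, div_div_div_cancel_right₀ hk0]
  obtain rfl : L' = hjDual L :=
    hjEval_inj hL' (hjDual_ne_nil L) h2' (two_le_of_mem_hjDual hL h2) (hval'.trans hdual.symm)
  exact partialSumsConjugate_hjDual hL h2

/-- If `n/k = [n₁,…,n_p]` and `n/(n−k) = [n₁',…,n_{p'}']` are the Hirzebruch–Jung
continued fraction expansions (all entries ≥ 2) for coprime `1 ≤ k < n`, then
`n₁' + ⋯ + n_α' = 2α + β` whenever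
`n₁ + ⋯ + n_β − 2β + 1 ≤ α ≤ n₁ + ⋯ + n_{β+1} − 2β − 2`; i.e. the Young diagrams of
the partitions `(n₁−1, n₁+n₂−3, …)` and `(n₁'−1, n₁'+n₂'−3, …)` are mutually dual. -/
theorem hj_dual_partial_sums (n k : ℕ) (hk : 1 ≤ k) (hkn : k < n) (hco : Nat.Coprime n k)
    (L L' : List ℤ) (hL : L ≠ []) (hL' : L' ≠ [])
    (h2 : ∀ a ∈ L, 2 ≤ a) (h2' : ∀ a ∈ L', 2 ≤ a)
    (hval : hjEval L = (n : ℚ) / (k : ℚ))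
    (hval' : hjEval L' = (n : ℚ) / ((n : ℚ) - (k : ℚ))) :
    ∀ α β : ℕ, β < L.length →
      (L.take β).sum - 2 * (β : ℤ) + 1 ≤ (α : ℤ) →
      (α : ℤ) ≤ (L.take (β + 1)).sum - 2 * (β : ℤ) - 2 →
      (L'.take α).sum = 2 * (α : ℤ) + (β : ℤ) :=
  hj_dual_partial_sums_general n k hk L L' hL hL' h2 h2' hval hval'
end
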